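/- arXiv:2009.02087 — 2 statements merged into one kernel-verified Lean document; each statement's English description precedes it below -/
import Mathlib

section
/- Let n ≥ 1, let b₁,…,bₙ ∈ ℂ and c ∈ ℂ with c not a nonpositive integer, and fix x = (x₁,…,xₙ) ∈ ℂⁿ. Then, as the real parameter a tends to +∞, F_D(a, b₁,…,bₙ; c; x₁/a,…,xₙ/a) converges to Φ₂^{(n)}[b₁,…,bₙ; c; x₁,…,xₙ]. -/
open Finset Filter

/-- The Humbert function `Φ₂⁽ⁿ⁾[b₁,…,bₙ; c; x₁,…,xₙ]`. -/
noncomputable def humbertC (n : ℕ) (b : Fin n → ℂ) (c : ℂ) (x : Fin n → ℂ) : ℂ :=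
  ∑' m : Fin n → ℕ,
    (∏ j, (ascPochhammer ℂ (m j)).eval (b j)) / (ascPochhammer ℂ (∑ j, m j)).eval c *
      ∏ j, x j ^ m j / ((m j).factorial : ℂ)

/-- The Lauricella hypergeometric function `F_D(a, b₁,…,bₙ; c; x₁,…,xₙ)`. -/
noncomputable def lauricellaFD (n : ℕ) (a : ℂ) (b : Fin n → ℂ) (c : ℂ)
    (x : Fin n → ℂ) : ℂ :=
  ∑' m : Fin n → ℕ,
    (ascPochhammer ℂ (∑ j, m j)).eval a *
        (∏ j, (ascPochhammer ℂ (m j)).eval (b j)) / (ascPochhammer ℂ (∑ j, m j)).eval c *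
      ∏ j, x j ^ m j / ((m j).factorial : ℂ)

/-
The `m`-th term of `F_D(a; b; c; x/a)` is `(a)_{|m|} / a^{|m|}` times the `m`-th term of
`Φ₂⁽ⁿ⁾[b; c; x]`, and `(a)_M / a^M = ∏_{i<M} (1 + i/a)` decreases to `1` as `a → ∞`. So it is
enough to dominate the terms for `a ≥ a₀` by a summable family (Tannery's theorem). Using
`|(b)_m| ≤ (|b|+1)^m m!` and `|(a₀)_M| ≤ C 2^M |(c)_M|` (the factors `|a₀+i|/|c+i|` tend to `1`),
the terms are bounded by `C ∏_j ρ_j^{m_j}` with `ρ_j = 2(|b_j|+1)|x_j|/a₀`, which is a product of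
geometric series once `a₀` is large.
-/

open Topology

lemma summable_pi_prod_of_nonneg {ι κ : Type*} [Fintype ι] {f : ι → κ → ℝ}
    (hf₀ : ∀ i k, 0 ≤ f i k) (hf : ∀ i, Summable (f i)) :
    Summable fun m : ι → κ => ∏ i, f i (m i) := by
  classical
  refine summable_of_sum_le (c := ∏ i, ∑' k, f i k) (fun m => prod_nonneg fun i _ => hf₀ i _)
    fun u => ?_
  calc ∑ m ∈ u, ∏ i, f i (m i)
      ≤ ∑ m ∈ Fintype.piFinset fun i => u.image (· i), ∏ i, f i (m i) :=
        sum_le_sum_of_subset_of_nonneg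
          (fun m hm => Fintype.mem_piFinset.2 fun i => mem_image_of_mem _ hm)
          fun m _ _ => prod_nonneg fun i _ => hf₀ i _
    _ = ∏ i, ∑ k ∈ u.image (· i), f i k := (prod_univ_sum _ _).symm
    _ ≤ ∏ i, ∑' k, f i k :=
        prod_le_prod (fun i _ => sum_nonneg fun k _ => hf₀ i k)
          fun i _ => (hf i).sum_le_tsum _ fun k _ => hf₀ i k

lemma exists_prod_range_le_mul_pow {f : ℕ → ℝ} {K : ℝ} (hf : ∀ i, 0 ≤ f i) (hK : 0 < K)
    (hfK : ∀ᶠ i in atTop, f i ≤ K) : ∃ C, ∀ M, ∏ i ∈ range M, f i ≤ C * K ^ M := by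
  obtain ⟨N, hN⟩ := eventually_atTop.1 hfK
  set u : ℕ → ℝ := fun M => (∏ i ∈ range M, f i) / K ^ M
  have hu₀ : ∀ M, 0 ≤ u M := fun M => div_nonneg (prod_nonneg fun i _ => hf i) (by positivity)
  have hu : AntitoneOn u {M | N ≤ M} := antitoneOn_nat_Ici_of_succ_le fun M hM => by
    simp only [u, prod_range_succ, pow_succ, mul_div_mul_comm]
    exact mul_le_of_le_one_right (hu₀ M) ((div_le_one hK).2 (hN M hM))
  have hle_sum : ∀ k ≤ N, u k ≤ ∑ k ∈ range (N + 1), u k := fun k hk =>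
    single_le_sum (fun k _ => hu₀ k) (mem_range.2 (Nat.lt_succ_of_le hk))
  refine ⟨∑ k ∈ range (N + 1), u k, fun M => ?_⟩
  rw [← div_le_iff₀ (pow_pos hK M)]
  rcases le_total M N with h | h
  · exact hle_sum M h
  · exact (hu (show N ≤ N from le_rfl) h h).trans (hle_sum N le_rfl)

lemma ascPochhammer_eval_eq_prod_range {R : Type*} [CommSemiring R] (n : ℕ) (r : R) :
    (ascPochhammer R n).eval r = ∏ i ∈ range n, (r + i) := by
  induction n with
  | zero => simp
  | succ n ih => rw [ascPochhammer_succ_eval, ih, prod_range_succ]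

lemma norm_ascPochhammer_eval_le {R : Type*} [NormedCommRing R] [NormOneClass R] (n : ℕ)
    (r : R) : ‖(ascPochhammer R n).eval r‖ ≤ (‖r‖ + 1) ^ n * n.factorial := by
  rw [ascPochhammer_eval_eq_prod_range, ← prod_range_add_one_eq_factorial, Nat.cast_prod,
    ← card_range n, ← prod_const, card_range, ← prod_mul_distrib]
  refine (Finset.norm_prod_le _ _).trans (prod_le_prod (fun _ _ => norm_nonneg _) fun i _ => ?_)
  have hi : ‖(i : R)‖ ≤ i := by simpa using Nat.norm_cast_le (α := R) i
  calc ‖r + i‖ ≤ ‖r‖ + i := (norm_add_le _ _).trans (by gcongr)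
    _ ≤ (‖r‖ + 1) * ↑(i + 1) := by push_cast; nlinarith [norm_nonneg r, i.cast_nonneg (α := ℝ)]

lemma exists_norm_ascPochhammer_eval_le_mul_pow {c : ℂ} (hc : ∀ k : ℕ, c ≠ -k) (t : ℂ) :
    ∃ C, ∀ M, ‖(ascPochhammer ℂ M).eval t‖ ≤ C * 2 ^ M * ‖(ascPochhammer ℂ M).eval c‖ := by
  have hc₀ : ∀ i : ℕ, 0 < ‖c + i‖ := fun i =>
    norm_pos_iff.2 fun h => hc i (eq_neg_of_add_eq_zero_left h)
  have hratio : ∀ᶠ i : ℕ in atTop, ‖t + i‖ / ‖c + i‖ ≤ 2 := by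
    filter_upwards [eventually_ge_atTop ⌈‖t‖ + 2 * ‖c‖⌉₊] with i hi
    have hi' : ‖t‖ + 2 * ‖c‖ ≤ i := Nat.ceil_le.1 hi
    have ht : ‖t + i‖ ≤ ‖t‖ + i := by simpa using norm_add_le t (i : ℂ)
    have hc' : (i : ℝ) - ‖c‖ ≤ ‖c + i‖ := by
      simpa [add_comm] using norm_sub_norm_le (i : ℂ) (-c)
    rw [div_le_iff₀ (hc₀ i)]
    linarith
  obtain ⟨C, hC⟩ := exists_prod_range_le_mul_pow
    (fun i => div_nonneg (norm_nonneg _) (norm_nonneg _)) two_pos hratio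
  refine ⟨C, fun M => ?_⟩
  have := hC M
  rwa [prod_div_distrib, div_le_iff₀ (prod_pos fun i _ => hc₀ i), ← norm_prod, ← norm_prod,
    ← ascPochhammer_eval_eq_prod_range, ← ascPochhammer_eval_eq_prod_range] at this

lemma ascPochhammer_eval_div_pow {K : Type*} [Field K] {a : K} (ha : a ≠ 0) (n : ℕ) :
    (ascPochhammer K n).eval a / a ^ n = ∏ i ∈ range n, (1 + i / a) := by
  rw [ascPochhammer_eval_eq_prod_range, ← card_range n, ← prod_const, card_range,
    ← prod_div_distrib]
  refine prod_congr rfl fun i _ => ?_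
  field_simp

lemma tendsto_prod_one_add_div_atTop (n : ℕ) :
    Tendsto (fun a : ℝ => ∏ i ∈ range n, (1 + i / a)) atTop (𝓝 1) := by
  simpa using tendsto_finsetProd (range n) fun i _ =>
    (tendsto_const_nhds.div_atTop tendsto_id).const_add (1 : ℝ)

lemma antitoneOn_prod_one_add_div (n : ℕ) :
    AntitoneOn (fun a : ℝ => ∏ i ∈ range n, (1 + i / a)) (Set.Ioi 0) := fun _ ha _ hb hab =>
  prod_le_prod (fun i _ => add_nonneg zero_le_one (div_nonneg i.cast_nonneg (le_of_lt hb)))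
    fun i _ => add_le_add_right (div_le_div_of_nonneg_left i.cast_nonneg ha hab) 1

lemma ascPochhammer_eval_ofReal_div_pow {a : ℝ} (ha : a ≠ 0) (n : ℕ) :
    (ascPochhammer ℂ n).eval (a : ℂ) / (a : ℂ) ^ n = ((∏ i ∈ range n, (1 + i / a) : ℝ) : ℂ) := by
  rw [ascPochhammer_eval_div_pow (Complex.ofReal_ne_zero.2 ha)]
  push_cast
  rfl

lemma tendsto_ascPochhammer_eval_ofReal_div_pow (n : ℕ) :
    Tendsto (fun a : ℝ => (ascPochhammer ℂ n).eval (a : ℂ) / (a : ℂ) ^ n) atTop (𝓝 1) := by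
  have h := (Complex.continuous_ofReal.tendsto 1).comp (tendsto_prod_one_add_div_atTop n)
  rw [Complex.ofReal_one] at h
  refine h.congr' ?_
  filter_upwards [eventually_gt_atTop 0] with a ha
  exact (ascPochhammer_eval_ofReal_div_pow ha.ne' n).symm

lemma norm_ascPochhammer_eval_ofReal_div_pow_le {a₀ a : ℝ} (h₀ : 0 < a₀) (h : a₀ ≤ a) (n : ℕ) :
    ‖(ascPochhammer ℂ n).eval (a : ℂ) / (a : ℂ) ^ n‖ ≤
      ‖(ascPochhammer ℂ n).eval (a₀ : ℂ) / (a₀ : ℂ) ^ n‖ := by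
  have h₁ : 0 < a := h₀.trans_le h
  rw [ascPochhammer_eval_ofReal_div_pow h₁.ne', ascPochhammer_eval_ofReal_div_pow h₀.ne',
    Complex.norm_real, Complex.norm_real, Real.norm_of_nonneg (by positivity),
    Real.norm_of_nonneg (by positivity)]
  exact antitoneOn_prod_one_add_div n h₀ h₁ h

section Humbert

variable {n : ℕ} (b : Fin n → ℂ) (c : ℂ) (x : Fin n → ℂ)

noncomputable def humbertTerm (m : Fin n → ℕ) : ℂ :=
  (∏ j, (ascPochhammer ℂ (m j)).eval (b j)) / (ascPochhammer ℂ (∑ j, m j)).eval c *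
    ∏ j, x j ^ m j / ((m j).factorial : ℂ)

lemma humbertC_eq_tsum : humbertC n b c x = ∑' m, humbertTerm b c x m := rfl

lemma lauricellaFD_div_eq_tsum (a : ℂ) :
    lauricellaFD n a b c (fun j => x j / a) =
      ∑' m, (ascPochhammer ℂ (∑ j, m j)).eval a / a ^ (∑ j, m j) * humbertTerm b c x m := by
  refine tsum_congr fun m => ?_
  have hx : ∏ j, (x j / a) ^ m j / ((m j).factorial : ℂ) =
      (∏ j, x j ^ m j / ((m j).factorial : ℂ)) / a ^ (∑ j, m j) := by
    rw [← prod_pow_eq_pow_sum, ← prod_div_distrib]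
    exact prod_congr rfl fun j _ => by rw [div_pow]; ring
  rw [humbertTerm, hx]
  ring

lemma norm_humbertTerm_le (m : Fin n → ℕ) :
    ‖humbertTerm b c x m‖ ≤
      (∏ j, ((‖b j‖ + 1) * ‖x j‖) ^ m j) / ‖(ascPochhammer ℂ (∑ j, m j)).eval c‖ := by
  rw [humbertTerm, norm_mul, norm_div, norm_prod, norm_prod, div_mul_eq_mul_div,
    ← prod_mul_distrib]
  refine div_le_div_of_nonneg_right (prod_le_prod (fun j _ => by positivity) fun j _ => ?_)
    (norm_nonneg _)
  have hfac : (0 : ℝ) < (m j).factorial := by positivity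
  rw [norm_div, norm_pow, Complex.norm_natCast, mul_pow, mul_div_assoc', div_le_iff₀ hfac]
  calc ‖(ascPochhammer ℂ (m j)).eval (b j)‖ * ‖x j‖ ^ m j
      ≤ (‖b j‖ + 1) ^ m j * (m j).factorial * ‖x j‖ ^ m j := by
        gcongr; exact norm_ascPochhammer_eval_le _ _
    _ = _ := by ring

variable {c} in
lemma exists_summable_bound_humbertTerm (hc : ∀ k : ℕ, c ≠ -k) :
    ∃ (a₀ : ℝ) (D : (Fin n → ℕ) → ℝ), Summable D ∧ ∀ a : ℝ, a₀ ≤ a → ∀ m,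
      ‖(ascPochhammer ℂ (∑ j, m j)).eval (a : ℂ) / (a : ℂ) ^ (∑ j, m j) * humbertTerm b c x m‖
        ≤ D m := by
  set a₀ : ℝ := 1 + ∑ j, 2 * (‖b j‖ + 1) * ‖x j‖
  set ρ : Fin n → ℝ := fun j => 2 * (‖b j‖ + 1) * ‖x j‖ / a₀
  have ha₀ : 0 < a₀ := by positivity
  have hρ₀ : ∀ j, 0 ≤ ρ j := fun j => by positivity
  have hρ₁ : ∀ j, ρ j < 1 := fun j => by
    rw [div_lt_one ha₀]
    have := single_le_sum (f := fun j => 2 * (‖b j‖ + 1) * ‖x j‖) (fun j _ => by positivity)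
      (mem_univ j)
    linarith
  obtain ⟨C, hC⟩ := exists_norm_ascPochhammer_eval_le_mul_pow hc (a₀ : ℂ)
  refine ⟨a₀, fun m => C * ∏ j, ρ j ^ m j,
    (summable_pi_prod_of_nonneg (fun j k => pow_nonneg (hρ₀ j) k)
      fun j => summable_geometric_of_lt_one (hρ₀ j) (hρ₁ j)).mul_left C, fun a ha m => ?_⟩
  set M := ∑ j, m j
  have hcM : (ascPochhammer ℂ M).eval c ≠ 0 := by
    rw [Ne, ascPochhammer_eval_eq_zero_iff]
    rintro ⟨k, -, hk⟩
    exact hc k (by rw [hk, neg_neg])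
  have hρ : ∏ j, ρ j ^ m j = 2 ^ M / a₀ ^ M * ∏ j, ((‖b j‖ + 1) * ‖x j‖) ^ m j := by
    simp only [ρ, M, ← prod_pow_eq_pow_sum, ← prod_div_distrib, ← prod_mul_distrib]
    exact prod_congr rfl fun j _ => by simp only [div_pow, mul_pow]; ring
  calc _ ≤ ‖(ascPochhammer ℂ M).eval (a₀ : ℂ) / (a₀ : ℂ) ^ M‖ *
        ((∏ j, ((‖b j‖ + 1) * ‖x j‖) ^ m j) / ‖(ascPochhammer ℂ M).eval c‖) := by
        rw [norm_mul]
        exact mul_le_mul (norm_ascPochhammer_eval_ofReal_div_pow_le ha₀ ha M)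
          (norm_humbertTerm_le b c x m) (norm_nonneg _) (norm_nonneg _)
    _ ≤ C * 2 ^ M * ‖(ascPochhammer ℂ M).eval c‖ / a₀ ^ M *
        ((∏ j, ((‖b j‖ + 1) * ‖x j‖) ^ m j) / ‖(ascPochhammer ℂ M).eval c‖) := by
        rw [norm_div, norm_pow, Complex.norm_real, Real.norm_of_nonneg ha₀.le]
        gcongr
        exact hC M
    _ = C * ∏ j, ρ j ^ m j := by
        rw [hρ]
        field_simp

end Humbert

theorem lauricella_tendsto_humbert_general (n : ℕ) (b : Fin n → ℂ) (c : ℂ)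
    (hc : ∀ k : ℕ, c ≠ -(k : ℂ)) (x : Fin n → ℂ) :
    Tendsto (fun a : ℝ => lauricellaFD n (a : ℂ) b c (fun j => x j / (a : ℂ)))
      atTop (nhds (humbertC n b c x)) := by
  obtain ⟨a₀, D, hD, hbound⟩ := exists_summable_bound_humbertTerm b x hc
  simp only [lauricellaFD_div_eq_tsum, humbertC_eq_tsum]
  refine tendsto_tsum_of_dominated_convergence hD (fun m => ?_) ?_
  · simpa using (tendsto_ascPochhammer_eval_ofReal_div_pow _).mul_const (humbertTerm b c x m)
  · filter_upwards [eventually_ge_atTop a₀] with a ha using hbound a ha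

/-- `F_D(a, b; c; x/a) → Φ₂⁽ⁿ⁾[b; c; x]` as the real parameter `a → +∞`. -/
theorem lauricella_tendsto_humbert (n : ℕ) (hn : 1 ≤ n) (b : Fin n → ℂ) (c : ℂ)
    (hc : ∀ k : ℕ, c ≠ -(k : ℂ)) (x : Fin n → ℂ) :
    Tendsto (fun a : ℝ => lauricellaFD n (a : ℂ) b c (fun j => x j / (a : ℂ)))
      atTop (nhds (humbertC n b c x)) :=
  lauricella_tendsto_humbert_general n b c hc x
end

section
/- Let n ≥ 2 and let a₁,…,aₙ be positive real numbers. Then ∫_{T^{n−1}} ∏_{j=1}^n t_j^{a_j−1} dt₁⋯dt_{n−1} = (∏_{j=1}^n Γ(a_j)) / Γ(a₁+⋯+aₙ), where in the integrand tₙ denotes 1 − Σ_{j=1}^{n−1} t_j. -/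
/-!
Induct on the dimension, slicing the simplex along its last free coordinate: for fixed
`s ∈ Tᵐ` the fibre is `u ∈ (0, c)` with `c = 1 - ∑ sᵢ`, and the substitution `u = c v` gives
`∫₀ᶜ u^(p-1) (c-u)^(q-1) du = c^(p+q-1) B(p, q)`. Thus one integration merges the last two
exponents `p, q` into `p + q` and multiplies by `Γ(p) Γ(q) / Γ(p + q)`, and the factors `Γ(p + q)`
telescope. Lower Lebesgue integrals make Tonelli available without integrability bookkeeping.
-/

open Finset MeasureTheory

/-- The open unit simplex `Tᵐ ⊆ ℝᵐ`. -/
def unitSimplex (m : ℕ) : Set (Fin m → ℝ) :=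
  {t | (∀ j, 0 < t j) ∧ ∑ j, t j < 1}

/-- Extend `t = (t₁,…,t_{n-1}) ∈ T^{n-1}` to `(t₁,…,t_{n-1},tₙ)` with
`tₙ = 1 - ∑_{j<n} t_j`. -/
noncomputable def tExt (n : ℕ) (t : Fin (n - 1) → ℝ) : Fin n → ℝ := fun j =>
  if h : (j : ℕ) < n - 1 then t ⟨j, h⟩ else 1 - ∑ i, t i

open scoped ENNReal
open ProbabilityTheory

lemma setLIntegral_rpow_mul_one_sub_rpow {p q : ℝ} (hp : 0 < p) (hq : 0 < q) :
    ∫⁻ x in Set.Ioo 0 1, ENNReal.ofReal (x ^ (p - 1) * (1 - x) ^ (q - 1)) =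
      ENNReal.ofReal (beta p q) := by
  have h := lintegral_betaPDF_eq_one hp hq
  simp_rw [lintegral_betaPDF, mul_assoc,
    ENNReal.ofReal_mul (one_div_pos.2 (beta_pos hp hq)).le] at h
  rw [lintegral_const_mul' _ _ ENNReal.ofReal_ne_top, mul_comm] at h
  rw [ENNReal.eq_inv_of_mul_eq_one_left h, one_div,
    ENNReal.ofReal_inv_of_pos (beta_pos hp hq), inv_inv]

lemma setLIntegral_rpow_mul_sub_rpow {c p q : ℝ} (hc : 0 < c) (hp : 0 < p) (hq : 0 < q) :
    ∫⁻ x in Set.Ioo 0 c, ENNReal.ofReal (x ^ (p - 1) * (c - x) ^ (q - 1)) =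
      ENNReal.ofReal (c ^ (p + q - 1) * beta p q) := by
  have hscale : (c * ·) '' Set.Ioo 0 1 = Set.Ioo 0 c := by
    simp [Set.image_mul_left_Ioo hc]
  rw [← hscale, lintegral_image_eq_lintegral_abs_deriv_mul measurableSet_Ioo
      (fun x _ => by simpa using ((hasDerivAt_id x).const_mul c).hasDerivWithinAt)
      (mul_right_injective₀ hc.ne').injOn]
  calc ∫⁻ x in Set.Ioo 0 1, ENNReal.ofReal |c| *
        ENNReal.ofReal ((c * x) ^ (p - 1) * (c - c * x) ^ (q - 1))
      = ∫⁻ x in Set.Ioo 0 1, ENNReal.ofReal (c ^ (p + q - 1)) *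
          ENNReal.ofReal (x ^ (p - 1) * (1 - x) ^ (q - 1)) := by
        refine setLIntegral_congr_fun measurableSet_Ioo fun x ⟨hx0, hx1⟩ => ?_
        rw [← ENNReal.ofReal_mul (abs_nonneg c), ← ENNReal.ofReal_mul (by positivity),
          abs_of_pos hc, show c - c * x = c * (1 - x) by ring,
          Real.mul_rpow hc.le hx0.le, Real.mul_rpow hc.le (by linarith),
          show p + q - 1 = (p - 1) + (q - 1) + 1 by ring, Real.rpow_add hc, Real.rpow_add hc,
          Real.rpow_one]
        ring_nf
    _ = ENNReal.ofReal (c ^ (p + q - 1) * beta p q) := by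
        rw [lintegral_const_mul' _ _ ENNReal.ofReal_ne_top,
          setLIntegral_rpow_mul_one_sub_rpow hp hq, ← ENNReal.ofReal_mul (by positivity)]

lemma measurableSet_unitSimplex (m : ℕ) : MeasurableSet (unitSimplex m) := by
  unfold unitSimplex
  measurability

lemma snoc_mem_unitSimplex_iff {m : ℕ} {s : Fin m → ℝ} {u : ℝ} :
    (Fin.snoc s u : Fin (m + 1) → ℝ) ∈ unitSimplex (m + 1) ↔
      s ∈ unitSimplex m ∧ u ∈ Set.Ioo 0 (1 - ∑ i, s i) := by
  simp only [unitSimplex, Set.mem_ofPred_eq, Fin.sum_snoc, Fin.forall_fin_succ', Fin.snoc_castSucc,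
    Fin.snoc_last, Set.mem_Ioo]
  constructor
  · rintro ⟨⟨hs, hu⟩, hsum⟩; exact ⟨⟨hs, by linarith⟩, hu, by linarith⟩
  · rintro ⟨⟨hs, -⟩, hu, hsum⟩; exact ⟨⟨hs, hu⟩, by linarith⟩

lemma setLIntegral_unitSimplex_succ {m : ℕ} {f : (Fin (m + 1) → ℝ) → ℝ≥0∞} (hf : Measurable f) :
    ∫⁻ t in unitSimplex (m + 1), f t =
      ∫⁻ s in unitSimplex m, ∫⁻ u in Set.Ioo 0 (1 - ∑ i, s i), f (Fin.snoc s u) := by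
  let e := (MeasurableEquiv.piFinSuccAbove (fun _ : Fin (m + 1) => ℝ) (Fin.last m)).symm
  have he := (volume_preserving_piFinSuccAbove (fun _ : Fin (m + 1) => ℝ) (Fin.last m)).symm
  have hF := hf.indicator (measurableSet_unitSimplex (m + 1))
  rw [← lintegral_indicator (measurableSet_unitSimplex _), ← he.lintegral_comp hF,
    Measure.volume_eq_prod,
    lintegral_prod_symm' (fun z => (unitSimplex (m + 1)).indicator f (e z)) (hF.comp e.measurable),
    ← lintegral_indicator (measurableSet_unitSimplex _)]
  refine lintegral_congr fun s => ?_
  have hsnoc : ∀ u, e (u, s) = Fin.snoc s u := fun u => Fin.insertNth_last' u s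
  simp only [hsnoc]
  by_cases hs : s ∈ unitSimplex m
  · rw [Set.indicator_of_mem hs, ← lintegral_indicator measurableSet_Ioo]
    refine lintegral_congr fun u => ?_
    by_cases hu : u ∈ Set.Ioo 0 (1 - ∑ i, s i)
    · rw [Set.indicator_of_mem (snoc_mem_unitSimplex_iff.2 ⟨hs, hu⟩), Set.indicator_of_mem hu]
    · rw [Set.indicator_of_notMem (fun h => hu (snoc_mem_unitSimplex_iff.1 h).2),
        Set.indicator_of_notMem hu]
  · simp [snoc_mem_unitSimplex_iff, hs]

noncomputable def dirichletWeight {m : ℕ} (a : Fin m → ℝ) (q : ℝ) (t : Fin m → ℝ) : ℝ :=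
  (∏ i, t i ^ (a i - 1)) * (1 - ∑ i, t i) ^ (q - 1)

section DirichletWeight

variable {m : ℕ}

@[fun_prop]
lemma measurable_dirichletWeight (a : Fin m → ℝ) (q : ℝ) : Measurable (dirichletWeight a q) := by
  unfold dirichletWeight; fun_prop

lemma dirichletWeight_nonneg (a : Fin m → ℝ) (q : ℝ) {t : Fin m → ℝ} (ht : t ∈ unitSimplex m) :
    0 ≤ dirichletWeight a q t :=
  mul_nonneg (prod_nonneg fun i _ => Real.rpow_nonneg (ht.1 i).le _)
    (Real.rpow_nonneg (sub_pos.2 ht.2).le _)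

lemma dirichletWeight_snoc (a : Fin (m + 1) → ℝ) (q : ℝ) (s : Fin m → ℝ) (u : ℝ) :
    dirichletWeight a q (Fin.snoc s u) =
      (∏ i, s i ^ (Fin.init a i - 1)) *
        (u ^ (a (Fin.last m) - 1) * ((1 - ∑ i, s i) - u) ^ (q - 1)) := by
  simp only [dirichletWeight, Fin.prod_univ_castSucc, Fin.sum_snoc, Fin.snoc_castSucc,
    Fin.snoc_last, Fin.init]
  ring_nf

lemma setLIntegral_dirichletWeight_snoc {a : Fin (m + 1) → ℝ} {q : ℝ} (ha : 0 < a (Fin.last m))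
    (hq : 0 < q) {s : Fin m → ℝ} (hs : s ∈ unitSimplex m) :
    ∫⁻ u in Set.Ioo 0 (1 - ∑ i, s i), ENNReal.ofReal (dirichletWeight a q (Fin.snoc s u)) =
      ENNReal.ofReal (dirichletWeight (Fin.init a) (a (Fin.last m) + q) s) *
        ENNReal.ofReal (beta (a (Fin.last m)) q) := by
  have hA : 0 ≤ ∏ i, s i ^ (Fin.init a i - 1) :=
    prod_nonneg fun i _ => Real.rpow_nonneg (hs.1 i).le _
  simp_rw [dirichletWeight_snoc, ENNReal.ofReal_mul hA]
  rw [lintegral_const_mul' _ _ ENNReal.ofReal_ne_top,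
    setLIntegral_rpow_mul_sub_rpow (sub_pos.2 hs.2) ha hq, dirichletWeight,
    ENNReal.ofReal_mul hA, ENNReal.ofReal_mul (Real.rpow_nonneg (sub_pos.2 hs.2).le _), mul_assoc]

lemma setLIntegral_dirichletWeight (a : Fin m → ℝ) (q : ℝ) (ha : ∀ i, 0 < a i) (hq : 0 < q) :
    ∫⁻ t in unitSimplex m, ENNReal.ofReal (dirichletWeight a q t) =
      ENNReal.ofReal ((∏ i, Real.Gamma (a i)) * Real.Gamma q / Real.Gamma (∑ i, a i + q)) := by
  induction m generalizing q with
  | zero =>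
    have hT : unitSimplex 0 = Set.univ := by ext t; simp [unitSimplex]
    simp [hT, dirichletWeight, div_self (Real.Gamma_pos_of_pos hq).ne', volume_pi]
  | succ m ih =>
    have hlast : 0 < a (Fin.last m) + q := add_pos (ha _) hq
    calc ∫⁻ t in unitSimplex (m + 1), ENNReal.ofReal (dirichletWeight a q t)
        = ∫⁻ s in unitSimplex m, ∫⁻ u in Set.Ioo 0 (1 - ∑ i, s i),
            ENNReal.ofReal (dirichletWeight a q (Fin.snoc s u)) :=
          setLIntegral_unitSimplex_succ (by fun_prop)
      _ = ∫⁻ s in unitSimplex m,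
            ENNReal.ofReal (dirichletWeight (Fin.init a) (a (Fin.last m) + q) s) *
              ENNReal.ofReal (beta (a (Fin.last m)) q) :=
          setLIntegral_congr_fun (measurableSet_unitSimplex m) fun s hs =>
            setLIntegral_dirichletWeight_snoc (ha _) hq hs
      _ = ENNReal.ofReal ((∏ i, Real.Gamma (Fin.init a i)) * Real.Gamma (a (Fin.last m) + q) /
              Real.Gamma (∑ i, Fin.init a i + (a (Fin.last m) + q))) *
            ENNReal.ofReal (beta (a (Fin.last m)) q) := by
          rw [lintegral_mul_const _ (by fun_prop), ih (Fin.init a) _ (fun i => ha _) hlast]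
      _ = ENNReal.ofReal ((∏ i, Real.Gamma (a i)) * Real.Gamma q /
            Real.Gamma (∑ i, a i + q)) := by
          rw [← ENNReal.ofReal_mul' (beta_pos (ha _) hq).le]
          congr 1
          have := (Real.Gamma_pos_of_pos hlast).ne'
          simp only [beta, Fin.prod_univ_castSucc, Fin.sum_univ_castSucc, Fin.init, add_assoc]
          field_simp

lemma setIntegral_dirichletWeight (a : Fin m → ℝ) (q : ℝ) (ha : ∀ i, 0 < a i) (hq : 0 < q) :
    ∫ t in unitSimplex m, dirichletWeight a q t =
      (∏ i, Real.Gamma (a i)) * Real.Gamma q / Real.Gamma (∑ i, a i + q) := by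
  rw [integral_eq_lintegral_of_nonneg_ae
      (ae_restrict_of_forall_mem (measurableSet_unitSimplex m) fun t => dirichletWeight_nonneg a q)
      (measurable_dirichletWeight a q).aestronglyMeasurable,
    setLIntegral_dirichletWeight a q ha hq, ENNReal.toReal_ofReal]
  exact div_nonneg
    (mul_nonneg (prod_nonneg fun i _ => Real.Gamma_nonneg_of_nonneg (ha i).le)
      (Real.Gamma_nonneg_of_nonneg hq.le))
    (Real.Gamma_nonneg_of_nonneg (add_nonneg (sum_nonneg fun i _ => (ha i).le) hq.le))

end DirichletWeight

lemma prod_tExt_rpow (m : ℕ) (a : Fin (m + 1) → ℝ) (t : Fin m → ℝ) :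
    ∏ j, tExt (m + 1) t j ^ (a j - 1) = dirichletWeight (Fin.init a) (a (Fin.last m)) t := by
  simp [dirichletWeight, tExt, Fin.prod_univ_castSucc, Fin.init]

/-- the Dirichlet integral over the simplex,
`∫_{T^{n-1}} ∏_{j=1}^n t_j^{a_j-1} dt = ∏ Γ(a_j) / Γ(a₁+⋯+aₙ)`. -/
theorem dirichlet_integral (n : ℕ) (hn : 2 ≤ n) (a : Fin n → ℝ) (ha : ∀ j, 0 < a j) :
    ∫ t in unitSimplex (n - 1), ∏ j, (tExt n t j) ^ (a j - 1) =
      (∏ j, Real.Gamma (a j)) / Real.Gamma (∑ j, a j) := by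
  obtain ⟨m, rfl⟩ : ∃ m, n = m + 1 := ⟨n - 1, by omega⟩
  have hweight : (fun t => ∏ j, tExt (m + 1) t j ^ (a j - 1)) =
      dirichletWeight (Fin.init a) (a (Fin.last m)) :=
    funext (prod_tExt_rpow m a)
  rw [hweight]
  refine (setIntegral_dirichletWeight _ _ (fun i => ha _) (ha _)).trans ?_
  rw [Fin.prod_univ_castSucc, Fin.sum_univ_castSucc]
  rfl
end
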